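/- Let G=(V,E) be a graph and C⊆V a set such that S=V∖C is a clique in G, and let L be a nonempty subset of C. Then pw(G[N[L]]; N(L)) = max{ |N(L)|, min_{u∈L} pw(G[N[L∖{u}]]; N(L∖{u})) }, where G[W] denotes the subgraph of G induced by W and the neighborhoods N(·), N[·] are taken in G. -/

import Mathlib

/-- A (finite, unrooted) tree decomposition of a graph `G` with node set `ι`. -/
structure TreeDecomp (V ι : Type) (G : SimpleGraph V) where
  tree : SimpleGraph ι
  tree_isTree : tree.IsTree
  bag : ι → Finset V
  bag_cover : ∀ v, ∃ i, v ∈ bag i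
  bag_edge : ∀ u v, G.Adj u v → ∃ i, u ∈ bag i ∧ v ∈ bag i
  bag_conn : ∀ v : V, (SimpleGraph.induce {i | v ∈ bag i} tree).Connected

/-- The width of a tree decomposition: maximum bag size minus one. -/
def TreeDecomp.width {V ι : Type} [Fintype ι] {G : SimpleGraph V}
    (d : TreeDecomp V ι G) : ℕ :=
  (Finset.univ.sup fun i => (d.bag i).card) - 1

/-- The treewidth of `G`: minimum width over all tree decompositions of `G`. -/
noncomputable def treewidth {V : Type} (G : SimpleGraph V) : ℕ :=
  sInf {w | ∃ (ι : Type) (inst : Fintype ι) (d : TreeDecomp V ι G),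
    @TreeDecomp.width V ι inst G d ≤ w}

/-- A path decomposition of `G` with bags indexed by `Fin n`. -/
structure PathDecomp {V : Type} (G : SimpleGraph V) (n : ℕ) where
  bag : Fin n → Finset V
  bag_cover : ∀ v, ∃ i, v ∈ bag i
  bag_edge : ∀ u v, G.Adj u v → ∃ i, u ∈ bag i ∧ v ∈ bag i
  bag_conv : ∀ i j k : Fin n, i ≤ j → j ≤ k → ∀ v, v ∈ bag i → v ∈ bag k → v ∈ bag j

/-- The width of a path decomposition: maximum bag size minus one. -/
def PathDecomp.width {V : Type} {G : SimpleGraph V} {n : ℕ} (d : PathDecomp G n) : ℕ :=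
  (Finset.univ.sup fun i => (d.bag i).card) - 1

/-- The pathwidth of `G`: minimum width over all path decompositions of `G`. -/
noncomputable def pathwidth {V : Type} (G : SimpleGraph V) : ℕ :=
  sInf {w | ∃ (n : ℕ) (d : PathDecomp G n), d.width ≤ w}

/-- `pw(G; W)`: minimum width over all path decompositions of `G` having `W` as an end bag. -/
noncomputable def pathwidthEnd {V : Type} (G : SimpleGraph V) (W : Set V) : ℕ :=
  sInf {w | ∃ (n : ℕ) (d : PathDecomp G (n + 1)),
    (↑(d.bag (Fin.last n)) : Set V) = W ∧ d.width ≤ w}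

/-- The (open) neighbourhood `N(W)` of a set of vertices. -/
def nbhd {V : Type} (G : SimpleGraph V) (W : Set V) : Set V :=
  {u | u ∉ W ∧ ∃ v ∈ W, G.Adj v u}

/-- The closed neighbourhood `N[W]` of a set of vertices. -/
def closedNbhd {V : Type} (G : SimpleGraph V) (W : Set V) : Set V :=
  nbhd G W ∪ W

/-!
Take a path decomposition of `G[N[L]]` of least width ending in `N(L)`, and let `j` be the last
bag meeting `L`, say in `u`. Each vertex of `N(L)` shares a bag with a neighbour in `L`, hence
one at or before `j`, and lies in the end bag, so bag `j` contains `N(L) ∪ {u}`: the width is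
at least `|N(L)|`. As `N(L \ {u}) ⊆ N(L) ∪ {u}`, the bags up to `j`, cut down to `N[L \ {u}]`
and followed by `N(L \ {u})`, form a decomposition for `L \ {u}` that is no wider.
Conversely, a decomposition for `L \ {u}` ending in `N(L \ {u})`, followed by the bags
`N(L) ∪ {u}` and `N(L)`, is one for `L` of width at most the maximum of `|N(L)|` and its own.
-/

open Finset

section

variable {V : Type}

def BagsConvex {n : ℕ} (b : Fin n → Finset V) : Prop :=
  ∀ i j k, i ≤ j → j ≤ k → ∀ v, v ∈ b i → v ∈ b k → v ∈ b j

namespace BagsConvex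

variable {n : ℕ} {b : Fin n → Finset V}

theorem comp_inter [DecidableEq V] (hb : BagsConvex b) {m : ℕ} {f : Fin m → Fin n}
    (hf : Monotone f) (s : Finset V) : BagsConvex fun i => b (f i) ∩ s :=
  fun _ _ _ hij hjk v hi hk => mem_inter.2
    ⟨hb _ _ _ (hf hij) (hf hjk) v (mem_inter.1 hi).1 (mem_inter.1 hk).1, (mem_inter.1 hi).2⟩

theorem snoc {b : Fin (n + 1) → Finset V} (hb : BagsConvex b) {B : Finset V}
    (hB : ∀ i, ∀ v ∈ b i, v ∈ B → v ∈ b (Fin.last n)) :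
    BagsConvex (Fin.snoc b B : Fin (n + 2) → Finset V) := by
  intro i j k hij hjk v hi hk
  induction k using Fin.lastCases with
  | last =>
    induction j using Fin.lastCases with
    | last => simpa using hk
    | cast j =>
      induction i using Fin.lastCases with
      | last => exact absurd (hij.trans_lt (Fin.castSucc_lt_last j)) (lt_irrefl _)
      | cast i =>
        simp only [Fin.snoc_castSucc, Fin.snoc_last] at hi hk ⊢
        exact hb i j _ (Fin.castSucc_le_castSucc_iff.1 hij) (Fin.le_last j) v hi (hB i v hi hk)
  | cast k =>
    obtain ⟨j, rfl⟩ := Fin.exists_castSucc_eq.2 (hjk.trans_lt (Fin.castSucc_lt_last k)).ne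
    obtain ⟨i, rfl⟩ := Fin.exists_castSucc_eq.2 (hij.trans_lt (Fin.castSucc_lt_last j)).ne
    simp only [Fin.snoc_castSucc] at hi hk ⊢
    exact hb i j k (Fin.castSucc_le_castSucc_iff.1 hij) (Fin.castSucc_le_castSucc_iff.1 hjk) v hi hk

end BagsConvex

/-- A path decomposition of `G.induce A` with bags in `V` rather than in the subtype `A`, so that
decompositions of `G[N[L]]` and `G[N[L \ {u}]]` can be transformed into one another. -/
structure PathDecompOn (G : SimpleGraph V) (A : Set V) (n : ℕ) where
  bag : Fin n → Finset V
  bag_subset : ∀ i, ↑(bag i) ⊆ A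
  bag_cover : ∀ v ∈ A, ∃ i, v ∈ bag i
  bag_edge : ∀ x y, x ∈ A → y ∈ A → G.Adj x y → ∃ i, x ∈ bag i ∧ y ∈ bag i
  bag_conv : BagsConvex bag

namespace PathDecompOn

variable {G : SimpleGraph V} {A W : Set V} {n : ℕ}

/-- Widths are handled through the largest bag size, which avoids the truncated `- 1`. -/
def maxBag (d : PathDecompOn G A n) : ℕ :=
  univ.sup fun i => (d.bag i).card

theorem maxBag_le_iff (d : PathDecompOn G A n) {k : ℕ} :
    d.maxBag ≤ k ↔ ∀ i, (d.bag i).card ≤ k := by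
  simp [maxBag, Finset.sup_le_iff]

theorem card_bag_le_maxBag (d : PathDecompOn G A n) (i : Fin n) : (d.bag i).card ≤ d.maxBag :=
  d.maxBag_le_iff.1 le_rfl i

noncomputable def toPathDecomp (d : PathDecompOn G A n) : PathDecomp (G.induce A) n where
  bag i := (d.bag i).preimage Subtype.val Subtype.val_injective.injOn
  bag_cover v := (d.bag_cover v v.2).imp fun _ hv => mem_preimage.2 hv
  bag_edge x y hxy := (d.bag_edge x y x.2 y.2 hxy).imp fun _ h =>
    ⟨mem_preimage.2 h.1, mem_preimage.2 h.2⟩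
  bag_conv i j k hij hjk v hi hk :=
    mem_preimage.2 (d.bag_conv i j k hij hjk v (mem_preimage.1 hi) (mem_preimage.1 hk))

theorem toPathDecomp_width_le (d : PathDecompOn G A n) :
    d.toPathDecomp.width ≤ d.maxBag - 1 := by
  refine Nat.sub_le_sub_right (Finset.sup_le fun i _ => ?_) 1
  exact (card_le_card_of_injOn (s := (d.bag i).preimage _ Subtype.val_injective.injOn)
    Subtype.val (fun x hx => mem_preimage.1 hx) Subtype.val_injective.injOn).trans
    (d.card_bag_le_maxBag i)

def ofPathDecomp (e : PathDecomp (G.induce A) n) : PathDecompOn G A n where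
  bag i := (e.bag i).map (Function.Embedding.subtype _)
  bag_subset i v hv := by
    obtain ⟨x, -, rfl⟩ := mem_map.1 hv
    exact x.2
  bag_cover v hv := (e.bag_cover ⟨v, hv⟩).imp fun _ h => mem_map_of_mem _ h
  bag_edge x y hx hy hxy := (e.bag_edge ⟨x, hx⟩ ⟨y, hy⟩ hxy).imp fun _ h =>
    ⟨mem_map_of_mem _ h.1, mem_map_of_mem _ h.2⟩
  bag_conv i j k hij hjk v hi hk := by
    obtain ⟨x, hxi, rfl⟩ := mem_map.1 hi
    obtain ⟨y, hyk, hyx⟩ := mem_map.1 hk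
    obtain rfl := Subtype.ext hyx
    exact mem_map_of_mem _ (e.bag_conv i j k hij hjk y hxi hyk)

theorem ofPathDecomp_maxBag (e : PathDecomp (G.induce A) n) :
    (ofPathDecomp e).maxBag = univ.sup fun i => (e.bag i).card := by
  simp only [maxBag, ofPathDecomp, card_map]

noncomputable def pair [Finite V] (G : SimpleGraph V) (hWA : W ⊆ A) : PathDecompOn G A 2 where
  bag := ![A.toFinite.toFinset, W.toFinite.toFinset]
  bag_subset i := by
    fin_cases i
    · simp
    · simpa using hWA
  bag_cover v hv := ⟨0, by simpa using hv⟩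
  bag_edge x y hx hy _ := ⟨0, by simpa using hx, by simpa using hy⟩
  bag_conv i j k hij hjk v hi hk := by
    fin_cases i <;> fin_cases j <;> fin_cases k <;> simp_all

theorem maxBag_le_ncard [Finite V] (d : PathDecompOn G A n) : d.maxBag ≤ A.ncard :=
  d.maxBag_le_iff.2 fun i => by
    simpa using Set.ncard_le_ncard (d.bag_subset i)

end PathDecompOn

open PathDecompOn in
theorem pathwidthEnd_induce_le_iff [Finite V] {G : SimpleGraph V} {A W : Set V} (hWA : W ⊆ A)
    {k : ℕ} : pathwidthEnd (G.induce A) {x : A | ↑x ∈ W} ≤ k ↔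
      ∃ n, ∃ d : PathDecompOn G A (n + 1),
        ↑(d.bag (Fin.last n)) = W ∧ d.maxBag ≤ k + 1 := by
  constructor
  · intro hk
    have hne : {w | ∃ (n : ℕ) (e : PathDecomp (G.induce A) (n + 1)),
        (↑(e.bag (Fin.last n)) : Set A) = {x : A | ↑x ∈ W} ∧ e.width ≤ w}.Nonempty := by
      refine ⟨_, 1, (pair G hWA).toPathDecomp, ?_, le_rfl⟩
      ext x
      simp [toPathDecomp, pair]
    obtain ⟨n, e, hlast, hwidth⟩ := Nat.sInf_mem hne
    refine ⟨n, ofPathDecomp e, ?_, ?_⟩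
    · ext v
      simp only [ofPathDecomp, coe_map, Function.Embedding.subtype_apply, Set.mem_image,
        mem_coe, Subtype.exists, exists_and_right, exists_eq_right]
      exact ⟨fun ⟨hv, hlv⟩ => (Set.ext_iff.1 hlast ⟨v, hv⟩).1 hlv,
        fun hv => ⟨hWA hv, (Set.ext_iff.1 hlast ⟨v, hWA hv⟩).2 hv⟩⟩
    · rw [ofPathDecomp_maxBag]
      exact Nat.sub_le_iff_le_add.1 (hwidth.trans hk)
  · rintro ⟨n, d, hlast, hd⟩
    refine le_trans (Nat.sInf_le ⟨n, d.toPathDecomp, ?_, le_rfl⟩ : pathwidthEnd _ _ ≤ _) ?_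
    · ext x
      simp [toPathDecomp, ← hlast]
    · have := d.toPathDecomp_width_le
      omega

theorem pathwidthEnd_induce_le_ncard [Finite V] {G : SimpleGraph V} {A W : Set V}
    (hWA : W ⊆ A) : pathwidthEnd (G.induce A) {x : A | ↑x ∈ W} ≤ A.ncard - 1 :=
  (pathwidthEnd_induce_le_iff hWA).2
    ⟨1, PathDecompOn.pair G hWA, by simp [PathDecompOn.pair], by
      have := (PathDecompOn.pair G hWA).maxBag_le_ncard
      omega⟩

section Neighbourhoods

variable {G : SimpleGraph V} {L M : Set V} {u x y : V}

theorem nbhd_subset_closedNbhd : nbhd G L ⊆ closedNbhd G L := Set.subset_union_left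

theorem subset_closedNbhd : L ⊆ closedNbhd G L := Set.subset_union_right

theorem mem_nbhd_of_mem_closedNbhd (hx : x ∈ closedNbhd G M) (hxM : x ∉ M) : x ∈ nbhd G M :=
  hx.resolve_right hxM

theorem closedNbhd_mono (h : M ⊆ L) : closedNbhd G M ⊆ closedNbhd G L := by
  rintro x (⟨-, v, hv, hvx⟩ | hx)
  · by_cases hxL : x ∈ L
    · exact Or.inr hxL
    · exact Or.inl ⟨hxL, v, h hv, hvx⟩
  · exact Or.inr (h hx)

theorem notMem_of_adj_of_notMem_closedNbhd (hxy : G.Adj x y) (hx : x ∉ closedNbhd G M) :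
    y ∉ M := fun hy =>
  hx (Or.inl ⟨fun hxM => hx (Or.inr hxM), y, hy, hxy.symm⟩)

theorem mem_insert_nbhd_of_notMem_sdiff (hy : y ∈ closedNbhd G L) (hy' : y ∉ L \ {u}) :
    y ∈ insert u (nbhd G L) := by
  rcases hy with hy | hy
  · exact Or.inr hy
  · exact Or.inl (by_contra fun h => hy' ⟨hy, h⟩)

theorem nbhd_sdiff_singleton_subset : nbhd G (L \ {u}) ⊆ insert u (nbhd G L) := fun _ hv =>
  mem_insert_nbhd_of_notMem_sdiff (closedNbhd_mono Set.sdiff_subset (Or.inl hv)) hv.1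

theorem closedNbhd_sdiff_singleton_inter_subset :
    closedNbhd G (L \ {u}) ∩ insert u (nbhd G L) ⊆ nbhd G (L \ {u}) := by
  rintro v ⟨hv | ⟨hvL, hvu⟩, rfl | hv'⟩
  · exact hv
  · exact hv
  · exact absurd rfl hvu
  · exact absurd hvL hv'.1

theorem mem_insert_nbhd_of_adj (hx : x ∈ closedNbhd G L) (hy : y ∈ closedNbhd G L)
    (hxy : G.Adj x y) (hx' : x ∉ closedNbhd G (L \ {u})) :
    x ∈ insert u (nbhd G L) ∧ y ∈ insert u (nbhd G L) :=
  ⟨mem_insert_nbhd_of_notMem_sdiff hx fun h => hx' (subset_closedNbhd h),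
    mem_insert_nbhd_of_notMem_sdiff hy (notMem_of_adj_of_notMem_closedNbhd hxy hx')⟩

end Neighbourhoods

namespace PathDecompOn

variable [Finite V] [DecidableEq V] {G : SimpleGraph V} {L : Set V} {u : V} {n : ℕ}

noncomputable def extend (d : PathDecompOn G (closedNbhd G (L \ {u})) (n + 1)) (hu : u ∈ L)
    (hlast : ↑(d.bag (Fin.last n)) = nbhd G (L \ {u})) :
    PathDecompOn G (closedNbhd G L) (n + 3) where
  bag := Fin.snoc
    (Fin.snoc d.bag (insert u (nbhd G L).toFinite.toFinset) : Fin (n + 2) → Finset V)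
    (nbhd G L).toFinite.toFinset
  bag_subset i := by
    induction i using Fin.lastCases with
    | last => simpa using nbhd_subset_closedNbhd
    | cast i =>
      induction i using Fin.lastCases with
      | last =>
        simpa [Set.insert_subset_iff] using ⟨subset_closedNbhd hu, nbhd_subset_closedNbhd⟩
      | cast i => simpa using (d.bag_subset i).trans (closedNbhd_mono Set.sdiff_subset)
  bag_cover v hv := by
    by_cases hv' : v ∈ closedNbhd G (L \ {u})
    · obtain ⟨i, hi⟩ := d.bag_cover v hv'
      exact ⟨i.castSucc.castSucc, by simpa using hi⟩
    · refine ⟨(Fin.last _).castSucc, ?_⟩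
      simpa using mem_insert_nbhd_of_notMem_sdiff hv fun h => hv' (subset_closedNbhd h)
  bag_edge x y hx hy hxy := by
    by_cases h : x ∈ closedNbhd G (L \ {u}) ∧ y ∈ closedNbhd G (L \ {u})
    · obtain ⟨i, hi⟩ := d.bag_edge x y h.1 h.2 hxy
      exact ⟨i.castSucc.castSucc, by simpa using hi⟩
    · have hxy' : x ∈ insert u (nbhd G L) ∧ y ∈ insert u (nbhd G L) := by
        rcases not_and_or.1 h with h | h
        · exact mem_insert_nbhd_of_adj hx hy hxy h
        · exact (mem_insert_nbhd_of_adj hy hx hxy.symm h).symm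
      exact ⟨(Fin.last _).castSucc, by simpa using hxy'⟩
  bag_conv := by
    refine (d.bag_conv.snoc fun i v hv hv' => ?_).snoc fun i v _ hv' => by simp_all
    rw [← mem_coe, hlast]
    exact closedNbhd_sdiff_singleton_inter_subset ⟨d.bag_subset i hv, by simpa using hv'⟩

theorem extend_last (d : PathDecompOn G (closedNbhd G (L \ {u})) (n + 1)) (hu : u ∈ L)
    (hlast : ↑(d.bag (Fin.last n)) = nbhd G (L \ {u})) :
    ↑((d.extend hu hlast).bag (Fin.last (n + 2))) = nbhd G L := by
  simp [extend]

theorem extend_maxBag_le (d : PathDecompOn G (closedNbhd G (L \ {u})) (n + 1)) (hu : u ∈ L)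
    (hlast : ↑(d.bag (Fin.last n)) = nbhd G (L \ {u})) :
    (d.extend hu hlast).maxBag ≤ max d.maxBag ((nbhd G L).ncard + 1) := by
  refine maxBag_le_iff _ |>.2 fun i => ?_
  have hN : (nbhd G L).toFinite.toFinset.card = (nbhd G L).ncard :=
    (Set.ncard_eq_toFinset_card _ _).symm
  induction i using Fin.lastCases with
  | last => simp [extend, hN]
  | cast i =>
    induction i using Fin.lastCases with
    | last => simpa [extend, hN] using Or.inr (card_insert_le u (nbhd G L).toFinite.toFinset)
    | cast i => simpa [extend] using Or.inl (d.card_bag_le_maxBag i)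

noncomputable def restrict (d : PathDecompOn G (closedNbhd G L) (n + 1)) (j : Fin (n + 1))
    (hj : ∀ i, ∀ v ∈ L, v ∈ d.bag i → i ≤ j) (hN : nbhd G (L \ {u}) ⊆ d.bag j) :
    PathDecompOn G (closedNbhd G (L \ {u})) (j + 2) where
  bag := Fin.snoc (fun i : Fin (j + 1) =>
      d.bag (Fin.castLE j.isLt i) ∩ (closedNbhd G (L \ {u})).toFinite.toFinset)
    (nbhd G (L \ {u})).toFinite.toFinset
  bag_subset i := by
    induction i using Fin.lastCases with
    | last => simpa using nbhd_subset_closedNbhd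
    | cast i => simp
  bag_cover v hv := by
    rcases hv with hv | hv
    · exact ⟨Fin.last _, by simpa using hv⟩
    · obtain ⟨i, hi⟩ := d.bag_cover v (closedNbhd_mono Set.sdiff_subset (subset_closedNbhd hv))
      refine ⟨Fin.castSucc ⟨i, Nat.lt_succ_of_le (hj i v hv.1 hi)⟩, ?_⟩
      rw [Fin.snoc_castSucc]
      simpa using ⟨hi, subset_closedNbhd hv⟩
  bag_edge x y hx hy hxy := by
    obtain ⟨i, hi⟩ := d.bag_edge x y (closedNbhd_mono Set.sdiff_subset hx)
      (closedNbhd_mono Set.sdiff_subset hy) hxy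
    by_cases hij : i ≤ j
    · refine ⟨Fin.castSucc ⟨i, Nat.lt_succ_of_le hij⟩, ?_⟩
      rw [Fin.snoc_castSucc]
      simpa using ⟨⟨hi.1, hx⟩, hi.2, hy⟩
    · have hnbhd : ∀ v ∈ closedNbhd G (L \ {u}), v ∈ d.bag i → v ∈ nbhd G (L \ {u}) :=
        fun v hv hvi => mem_nbhd_of_mem_closedNbhd hv fun hvL => hij (hj i v hvL.1 hvi)
      exact ⟨Fin.last _, by simpa using ⟨hnbhd x hx hi.1, hnbhd y hy hi.2⟩⟩
  bag_conv := by
    refine (d.bag_conv.comp_inter (f := Fin.castLE j.isLt) (fun _ _ h => h) _).snoc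
      fun i v _ hv => ?_
    rw [Set.Finite.mem_toFinset] at hv
    simpa using ⟨hN hv, nbhd_subset_closedNbhd hv⟩

theorem restrict_last (d : PathDecompOn G (closedNbhd G L) (n + 1)) (j : Fin (n + 1))
    (hj : ∀ i, ∀ v ∈ L, v ∈ d.bag i → i ≤ j) (hN : nbhd G (L \ {u}) ⊆ d.bag j) :
    ↑((d.restrict j hj hN).bag (Fin.last (j + 1))) = nbhd G (L \ {u}) := by
  simp [restrict]

theorem restrict_maxBag_le (d : PathDecompOn G (closedNbhd G L) (n + 1)) (j : Fin (n + 1))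
    (hj : ∀ i, ∀ v ∈ L, v ∈ d.bag i → i ≤ j) (hN : nbhd G (L \ {u}) ⊆ d.bag j) :
    (d.restrict j hj hN).maxBag ≤ d.maxBag := by
  refine maxBag_le_iff _ |>.2 fun i => ?_
  induction i using Fin.lastCases with
  | last =>
    refine le_trans (card_le_card fun v hv => ?_) (d.card_bag_le_maxBag j)
    simpa using hN (by simpa [restrict] using hv)
  | cast i =>
    simpa [restrict] using (card_le_card inter_subset_left).trans (d.card_bag_le_maxBag _)

end PathDecompOn

namespace PathDecompOn

variable {G : SimpleGraph V} {L : Set V} {u : V} {n : ℕ}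

theorem exists_last_bag_meeting {A M : Set V} (d : PathDecompOn G A n) (hMA : M ⊆ A)
    (hM : M.Nonempty) :
    ∃ j, ∃ u ∈ M, u ∈ d.bag j ∧ ∀ i, ∀ v ∈ M, v ∈ d.bag i → i ≤ j := by
  classical
  obtain ⟨v, hv⟩ := hM
  obtain ⟨i, hi⟩ := d.bag_cover v (hMA hv)
  obtain ⟨j, hj, hmax⟩ := (univ.filter fun i => ∃ v ∈ M, v ∈ d.bag i).exists_max_image id
    ⟨i, mem_filter.2 ⟨mem_univ _, v, hv, hi⟩⟩
  obtain ⟨u, hu, huj⟩ := (mem_filter.1 hj).2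
  exact ⟨j, u, hu, huj, fun i v hv hvi => hmax i (mem_filter.2 ⟨mem_univ _, v, hv, hvi⟩)⟩

theorem insert_nbhd_subset_bag (d : PathDecompOn G (closedNbhd G L) (n + 1))
    (hlast : ↑(d.bag (Fin.last n)) = nbhd G L) {j : Fin (n + 1)}
    (hj : ∀ i, ∀ v ∈ L, v ∈ d.bag i → i ≤ j) (hu : u ∈ d.bag j) :
    insert u (nbhd G L) ⊆ d.bag j := by
  rintro x (rfl | hx)
  · exact hu
  · obtain ⟨-, v, hvL, hvx⟩ := id hx
    obtain ⟨i, hvi, hxi⟩ :=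
      d.bag_edge v x (subset_closedNbhd hvL) (nbhd_subset_closedNbhd hx) hvx
    have hx_last : x ∈ d.bag (Fin.last n) := by rw [← mem_coe, hlast]; exact hx
    exact d.bag_conv i j _ (hj i v hvL hvi) (Fin.le_last j) x hxi hx_last

theorem exists_decomp_sdiff_singleton [Finite V] (d : PathDecompOn G (closedNbhd G L) (n + 1))
    (hlast : ↑(d.bag (Fin.last n)) = nbhd G L) (hL : L.Nonempty) :
    ∃ u ∈ L, (nbhd G L).ncard + 1 ≤ d.maxBag ∧
      ∃ m, ∃ d' : PathDecompOn G (closedNbhd G (L \ {u})) (m + 1),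
        ↑(d'.bag (Fin.last m)) = nbhd G (L \ {u}) ∧ d'.maxBag ≤ d.maxBag := by
  classical
  obtain ⟨j, u, hu, huj, hj⟩ := d.exists_last_bag_meeting subset_closedNbhd hL
  have hsub := d.insert_nbhd_subset_bag hlast hj huj
  have hN := nbhd_sdiff_singleton_subset.trans hsub
  refine ⟨u, hu, ?_, j + 1, d.restrict j hj hN, d.restrict_last j hj hN,
    d.restrict_maxBag_le j hj hN⟩
  calc (nbhd G L).ncard + 1 = (insert u (nbhd G L)).ncard :=
        (Set.ncard_insert_of_notMem (fun h => h.1 hu)).symm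
    _ ≤ (d.bag j : Set V).ncard := Set.ncard_le_ncard hsub
    _ = (d.bag j).card := Set.ncard_coe_finset _
    _ ≤ d.maxBag := d.card_bag_le_maxBag j

end PathDecompOn

/-- `pw(G[N[L]]; N(L))`. -/
noncomputable def pathwidthNbhd (G : SimpleGraph V) (L : Set V) : ℕ :=
  pathwidthEnd (G.induce (closedNbhd G L)) {x : ↥(closedNbhd G L) | ↑x ∈ nbhd G L}

variable [Finite V] {G : SimpleGraph V} {L : Set V}

theorem pathwidthNbhd_le_iff {k : ℕ} :
    pathwidthNbhd G L ≤ k ↔ ∃ n, ∃ d : PathDecompOn G (closedNbhd G L) (n + 1),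
      ↑(d.bag (Fin.last n)) = nbhd G L ∧ d.maxBag ≤ k + 1 :=
  pathwidthEnd_induce_le_iff nbhd_subset_closedNbhd

theorem pathwidthNbhd_empty : pathwidthNbhd G ∅ = 0 :=
  Nat.le_zero.1 <| (pathwidthEnd_induce_le_ncard nbhd_subset_closedNbhd).trans (by
    simp [closedNbhd, nbhd])

theorem pathwidthNbhd_le_max_sdiff_singleton {u : V} (hu : u ∈ L) :
    pathwidthNbhd G L ≤ max (nbhd G L).ncard (pathwidthNbhd G (L \ {u})) := by
  classical
  obtain ⟨n, d, hlast, hd⟩ :=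
    pathwidthNbhd_le_iff.1 (le_refl (pathwidthNbhd G (L \ {u})))
  refine pathwidthNbhd_le_iff.2 ⟨n + 2, d.extend hu hlast, d.extend_last hu hlast, ?_⟩
  have := d.extend_maxBag_le hu hlast
  omega

theorem exists_pathwidthNbhd_sdiff_singleton_le (hL : L.Nonempty) :
    (nbhd G L).ncard ≤ pathwidthNbhd G L ∧
      ∃ u ∈ L, pathwidthNbhd G (L \ {u}) ≤ pathwidthNbhd G L := by
  obtain ⟨n, d, hlast, hd⟩ := pathwidthNbhd_le_iff.1 (le_refl (pathwidthNbhd G L))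
  obtain ⟨u, hu, hcard, m, d', hlast', hd'⟩ := d.exists_decomp_sdiff_singleton hlast hL
  exact ⟨by omega, u, hu, pathwidthNbhd_le_iff.2 ⟨m, d', hlast', by omega⟩⟩

end

theorem pathwidthEnd_recursion_general {V : Type} [Fintype V]
    (G : SimpleGraph V) (L : Set V) :
    pathwidthEnd (G.induce (closedNbhd G L)) {x : ↥(closedNbhd G L) | ↑x ∈ nbhd G L} =
      max (nbhd G L).ncard
        (sInf {m | ∃ u ∈ L,
          m = pathwidthEnd (G.induce (closedNbhd G (L \ {u})))
            {x : ↥(closedNbhd G (L \ {u})) | ↑x ∈ nbhd G (L \ {u})}}) := by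
  change pathwidthNbhd G L =
    max (nbhd G L).ncard (sInf {m | ∃ u ∈ L, m = pathwidthNbhd G (L \ {u})})
  rcases L.eq_empty_or_nonempty with rfl | hL
  · simp [pathwidthNbhd_empty, nbhd]
  set S := {m | ∃ u ∈ L, m = pathwidthNbhd G (L \ {u})}
  obtain ⟨hcard, u, hu, hle⟩ := exists_pathwidthNbhd_sdiff_singleton_le (G := G) hL
  obtain ⟨v, hv, hmin⟩ : sInf S ∈ S := Nat.sInf_mem ⟨_, u, hu, rfl⟩
  refine le_antisymm ?_ (max_le hcard ((Nat.sInf_le (s := S) ⟨u, hu, rfl⟩).trans hle))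
  rw [hmin]
  exact pathwidthNbhd_le_max_sdiff_singleton hv

theorem pathwidthEnd_recursion {V : Type} [Fintype V] [DecidableEq V]
    (G : SimpleGraph V) (C : Set V) (hS : G.IsClique (Set.univ \ C))
    (L : Set V) (hL : L ⊆ C) (hLne : L ≠ ∅) :
    pathwidthEnd (G.induce (closedNbhd G L)) {x : ↥(closedNbhd G L) | ↑x ∈ nbhd G L} =
      max (nbhd G L).ncard
        (sInf {m | ∃ u ∈ L,
          m = pathwidthEnd (G.induce (closedNbhd G (L \ {u})))
            {x : ↥(closedNbhd G (L \ {u})) | ↑x ∈ nbhd G (L \ {u})}}) :=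
  pathwidthEnd_recursion_general G L
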